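/- Let μ_0^{I,N} = (1/N) Σ_{i=1}^N 1_A(X^i) ξ_i δ_{X^i}, where X^1,...,X^N are i.i.d. T^2-valued random variables with density g bounded above by δ_2, ξ_1,...,ξ_N are i.i.d. Bernoulli(p) independent of the X^i, and A ⊆ T^2 is Borel. Let μ_0^I(dx) = p·1_A(x)·g(x)dx and V_0^N = √N(μ_0^{I,N} − μ_0^I), viewed as an element of the Sobolev space H^{−s}(T^2). Then for any s > 1, sup_{N≥1} E(||V_0^N||²_{H^{−s}}) ≤ p·δ_2·C(s) for a constant C(s) depending only on s. -/

import Mathlib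

/-!
Expand `‖V₀ᴺ‖²_{H^{-s}}` in the basis `ρ^{j,s}` and exchange the sum over modes with the
expectation (Tonelli). For the mode `j`, with `f = 1_A ρ^{j,s}`, the coefficient is `√N` times the
centred empirical mean of the i.i.d. bounded variables `f(Xⁱ) ξᵢ`, so its second moment is their
variance, at most `E[f(X)² ξ] = p ∫ f² g ≤ p δ₂ sup f²`. The trigonometric functions are bounded
by `2`, hence `sup (ρ^{j,s})² ≤ 4 (1 + γπ²(n₁² + n₂²))^{-s}`, which is summable over the
frequency lattice because `s > 1`.
-/

open MeasureTheory Real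

noncomputable section

/-- The two-dimensional torus `T² = ℝ²/ℤ²`. -/
abbrev T2 := AddCircle (1 : ℝ) × AddCircle (1 : ℝ)

instance : Fact ((0 : ℝ) < 1) := ⟨one_pos⟩

/-- `cc m x = cos(2πmx)` on the circle `ℝ/ℤ`. -/
def cc (m : ℕ) (x : AddCircle (1 : ℝ)) : ℝ := (fourier (m : ℤ) x).re

/-- `ss m x = sin(2πmx)` on the circle `ℝ/ℤ`. -/
def ss (m : ℕ) (x : AddCircle (1 : ℝ)) : ℝ := (fourier (m : ℤ) x).im

/-- Index set of the trigonometric basis of `L²(T²)`.  A positive even frequency `n` is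
written `n = 2m` with `m : ℕ+`; `const` is the constant function `1`; `hcos m, hsin m`
are the families `√2·cos(πn₁x₁), √2·sin(πn₁x₁)` (families 5,6); `vcos m, vsin m` the
families `√2·cos(πn₂x₂), √2·sin(πn₂x₂)` (families 7,8); and `sc, s2, c2, cs` the interior
families `2·sin·cos, 2·sin·sin, 2·cos·cos, 2·cos·sin` (families 1–4). -/
inductive Idx where
  | const : Idx
  | hcos : ℕ+ → Idx
  | hsin : ℕ+ → Idx
  | vcos : ℕ+ → Idx
  | vsin : ℕ+ → Idx
  | sc : ℕ+ → ℕ+ → Idx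
  | s2 : ℕ+ → ℕ+ → Idx
  | c2 : ℕ+ → ℕ+ → Idx
  | cs : ℕ+ → ℕ+ → Idx

/-- The quantity `n₁² + n₂²` for the basis function indexed by `j` (with `n = 2m`). -/
def lam : Idx → ℝ
  | .const => 0
  | .hcos m => (2 * (m : ℕ) : ℝ) ^ 2
  | .hsin m => (2 * (m : ℕ) : ℝ) ^ 2
  | .vcos m => (2 * (m : ℕ) : ℝ) ^ 2
  | .vsin m => (2 * (m : ℕ) : ℝ) ^ 2
  | .sc m₁ m₂ => (2 * (m₁ : ℕ) : ℝ) ^ 2 + (2 * (m₂ : ℕ) : ℝ) ^ 2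
  | .s2 m₁ m₂ => (2 * (m₁ : ℕ) : ℝ) ^ 2 + (2 * (m₂ : ℕ) : ℝ) ^ 2
  | .c2 m₁ m₂ => (2 * (m₁ : ℕ) : ℝ) ^ 2 + (2 * (m₂ : ℕ) : ℝ) ^ 2
  | .cs m₁ m₂ => (2 * (m₁ : ℕ) : ℝ) ^ 2 + (2 * (m₂ : ℕ) : ℝ) ^ 2

/-- The trigonometric orthonormal basis functions `f^i_{n₁,n₂}` of `L²(T²)`:
e.g. `f^1_{n₁,n₂}(x) = 2 sin(πn₁x₁) cos(πn₂x₂)` with `n₁ = 2m₁, n₂ = 2m₂` even. -/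
def bf : Idx → T2 → ℝ
  | .const => fun _ => 1
  | .hcos m => fun x => Real.sqrt 2 * cc m x.1
  | .hsin m => fun x => Real.sqrt 2 * ss m x.1
  | .vcos m => fun x => Real.sqrt 2 * cc m x.2
  | .vsin m => fun x => Real.sqrt 2 * ss m x.2
  | .sc m₁ m₂ => fun x => 2 * ss m₁ x.1 * cc m₂ x.2
  | .s2 m₁ m₂ => fun x => 2 * ss m₁ x.1 * ss m₂ x.2
  | .c2 m₁ m₂ => fun x => 2 * cc m₁ x.1 * cc m₂ x.2
  | .cs m₁ m₂ => fun x => 2 * cc m₁ x.1 * ss m₂ x.2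


/-- The Bernoulli(p) law on `ℝ`: mass `p` at `1` and `1−p` at `0`. -/
def bern (p : ℝ) : Measure ℝ :=
  ENNReal.ofReal p • Measure.dirac 1 + ENNReal.ofReal (1 - p) • Measure.dirac 0

/-- The orthonormal basis `ρ^{i,s}_{n₁,n₂} = f^i_{n₁,n₂}/(1+γπ²(n₁²+n₂²))^{s/2}`
of `H^s(T²)`. -/
def rho (γ s : ℝ) (j : Idx) (x : T2) : ℝ := bf j x / (1 + γ * π ^ 2 * lam j) ^ (s / 2)

lemma cc_sq_le_one (m : ℕ) (x : AddCircle (1 : ℝ)) : cc m x ^ 2 ≤ 1 :=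
  (sq_le_one_iff_abs_le_one _).2 <| (Complex.abs_re_le_norm _).trans_eq (Circle.norm_coe _)

lemma ss_sq_le_one (m : ℕ) (x : AddCircle (1 : ℝ)) : ss m x ^ 2 ≤ 1 :=
  (sq_le_one_iff_abs_le_one _).2 <| (Complex.abs_im_le_norm _).trans_eq (Circle.norm_coe _)

lemma bf_sq_le (j : Idx) (x : T2) : bf j x ^ 2 ≤ 4 := by
  have h2 : √2 ^ 2 = 2 := Real.sq_sqrt zero_le_two
  cases j <;> simp only [bf, mul_pow, h2]
  · norm_num
  all_goals
    calc _ ≤ (2 : ℝ) ^ 2 * 1 * 1 := by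
          gcongr <;> first | apply cc_sq_le_one | apply ss_sq_le_one | norm_num
      _ = 4 := by norm_num

lemma measurable_bf (j : Idx) : Measurable (bf j) := by
  have hcc (m : ℕ) : Continuous (cc m) := Complex.continuous_re.comp (map_continuous _)
  have hss (m : ℕ) : Continuous (ss m) := Complex.continuous_im.comp (map_continuous _)
  cases j <;> simp only [bf] <;> fun_prop

lemma measurable_rho (γ s : ℝ) (j : Idx) : Measurable (rho γ s j) :=
  (measurable_bf j).div_const _

def sobolevWeight (γ s : ℝ) (j : Idx) : ℝ := (1 + γ * π ^ 2 * lam j) ^ (-s)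

lemma lam_nonneg (j : Idx) : 0 ≤ lam j := by
  cases j <;> simp only [lam] <;> positivity

lemma one_add_mul_lam_pos {γ : ℝ} (hγ : 0 ≤ γ) (j : Idx) : 0 < 1 + γ * π ^ 2 * lam j := by
  have := lam_nonneg j
  positivity

lemma sobolevWeight_nonneg {γ : ℝ} (hγ : 0 ≤ γ) (s : ℝ) (j : Idx) : 0 ≤ sobolevWeight γ s j :=
  (Real.rpow_pos_of_pos (one_add_mul_lam_pos hγ j) _).le

lemma rho_sq_le {γ : ℝ} (hγ : 0 ≤ γ) (s : ℝ) (j : Idx) (x : T2) :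
    rho γ s j x ^ 2 ≤ 4 * sobolevWeight γ s j := by
  have hb := one_add_mul_lam_pos hγ j
  have hsq : ((1 + γ * π ^ 2 * lam j) ^ (s / 2)) ^ 2 = (1 + γ * π ^ 2 * lam j) ^ s := by
    rw [← Real.rpow_mul_natCast hb.le]
    norm_num
  rw [rho, div_pow, hsq, div_eq_mul_inv, ← Real.rpow_neg hb.le, sobolevWeight]
  exact mul_le_mul_of_nonneg_right (bf_sq_le j x) (Real.rpow_pos_of_pos hb _).le

lemma summable_one_add_mul_sq_rpow_neg {c t : ℝ} (hc : 0 < c) (ht : 1 < 2 * t) :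
    Summable fun n : ℕ => (1 + c * (n : ℝ) ^ 2) ^ (-t) := by
  refine summable_of_isBigO_nat (Real.summable_nat_rpow.2 (by linarith : -(2 * t) < -1)) ?_
  refine Asymptotics.IsBigO.of_bound (c ^ (-t)) (Filter.eventually_atTop.2 ⟨1, fun n hn => ?_⟩)
  have hn : (0 : ℝ) < n := by exact_mod_cast hn
  have hpos : 0 < c * (n : ℝ) ^ 2 := by positivity
  rw [Real.norm_of_nonneg (by positivity), Real.norm_of_nonneg (by positivity)]
  calc (1 + c * (n : ℝ) ^ 2) ^ (-t) ≤ (c * (n : ℝ) ^ 2) ^ (-t) :=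
        Real.rpow_le_rpow_of_nonpos hpos (by linarith) (by linarith)
    _ = c ^ (-t) * (n : ℝ) ^ (-(2 * t)) := by
        rw [Real.mul_rpow hc.le (by positivity), ← Real.rpow_natCast_mul hn.le]
        push_cast
        ring_nf

lemma summable_one_add_mul_sq_add_sq_rpow_neg {c s : ℝ} (hc : 0 < c) (hs : 1 < s) :
    Summable fun q : ℕ × ℕ => (1 + c * ((q.1 : ℝ) ^ 2 + (q.2 : ℝ) ^ 2)) ^ (-s) := by
  have h := summable_one_add_mul_sq_rpow_neg (t := s / 2) hc (by linarith)
  refine (h.mul_of_nonneg h (fun _ => by positivity) (fun _ => by positivity)).of_nonneg_of_le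
    (fun _ => by positivity) fun ⟨a, b⟩ => ?_
  -- `(1 + c a²)(1 + c b²) ≤ (1 + c(a² + b²))²`
  have hu : 0 ≤ c * (a : ℝ) ^ 2 := by positivity
  have hv : 0 ≤ c * (b : ℝ) ^ 2 := by positivity
  calc (1 + c * ((a : ℝ) ^ 2 + (b : ℝ) ^ 2)) ^ (-s)
      = ((1 + c * ((a : ℝ) ^ 2 + (b : ℝ) ^ 2)) ^ 2) ^ (-(s / 2)) := by
        rw [← Real.rpow_natCast_mul (by positivity)]
        ring_nf
    _ ≤ ((1 + c * (a : ℝ) ^ 2) * (1 + c * (b : ℝ) ^ 2)) ^ (-(s / 2)) :=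
        Real.rpow_le_rpow_of_nonpos (by positivity) (by nlinarith) (by linarith)
    _ = (1 + c * (a : ℝ) ^ 2) ^ (-(s / 2)) * (1 + c * (b : ℝ) ^ 2) ^ (-(s / 2)) :=
        Real.mul_rpow (by positivity) (by positivity)

def Idx.code : Idx → Fin 9 × ℕ × ℕ
  | .const => (0, 0, 0)
  | .hcos m => (1, m, 0)
  | .hsin m => (2, m, 0)
  | .vcos m => (3, 0, m)
  | .vsin m => (4, 0, m)
  | .sc m₁ m₂ => (5, m₁, m₂)
  | .s2 m₁ m₂ => (6, m₁, m₂)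
  | .c2 m₁ m₂ => (7, m₁, m₂)
  | .cs m₁ m₂ => (8, m₁, m₂)

lemma Idx.code_injective : Function.Injective Idx.code := by
  intro j k h
  cases j <;> cases k <;> simp_all [Idx.code, Prod.ext_iff]

instance : Countable Idx := Idx.code_injective.countable

lemma lam_eq (j : Idx) : lam j = 4 * ((j.code.2.1 : ℝ) ^ 2 + (j.code.2.2 : ℝ) ^ 2) := by
  cases j <;> simp only [lam, Idx.code] <;> push_cast <;> ring

lemma summable_sobolevWeight {γ s : ℝ} (hγ : 0 < γ) (hs : 1 < s) :
    Summable (sobolevWeight γ s) := by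
  have hpair := summable_one_add_mul_sq_add_sq_rpow_neg (c := 4 * γ * π ^ 2) (by positivity) hs
  have hcode : Summable fun q : Fin 9 × ℕ × ℕ =>
      (1 + 4 * γ * π ^ 2 * ((q.2.1 : ℝ) ^ 2 + (q.2.2 : ℝ) ^ 2)) ^ (-s) :=
    (summable_prod_of_nonneg fun _ => by positivity).2 ⟨fun _ => hpair, .of_finite⟩
  refine (hcode.comp_injective Idx.code_injective).congr fun j => ?_
  rw [Function.comp_apply, sobolevWeight, lam_eq]
  ring_nf

open ProbabilityTheory

instance : IsProbabilityMeasure (volume : Measure (AddCircle (1 : ℝ))) :=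
  ⟨by simp [AddCircle.measure_univ]⟩

instance (p : ℝ) : IsFiniteMeasure (bern p) := ⟨by simp [bern]⟩

lemma integral_id_bern {p : ℝ} (hp : 0 ≤ p) : ∫ t, t ∂bern p = p := by
  rw [bern, integral_add_measure ((integrable_dirac (by simp)).smul_measure ENNReal.ofReal_ne_top)
    ((integrable_dirac (by simp)).smul_measure ENNReal.ofReal_ne_top)]
  simp [hp]

lemma integral_withDensity_ofReal {α : Type*} [MeasurableSpace α] {μ : Measure α} {g : α → ℝ}
    (hg : Measurable g) (hg0 : ∀ x, 0 ≤ g x) (f : α → ℝ) :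
    ∫ x, f x ∂μ.withDensity (fun x => ENNReal.ofReal (g x)) = ∫ x, f x * g x ∂μ := by
  rw [integral_withDensity_eq_integral_toReal_smul hg.ennreal_ofReal
    (ae_of_all _ fun _ => ENNReal.ofReal_lt_top)]
  simp only [ENNReal.toReal_ofReal (hg0 _), smul_eq_mul, mul_comm]

lemma integral_mul_of_map_eq_prod_bern {Ω α : Type*} [MeasurableSpace Ω] [MeasurableSpace α]
    {P : Measure Ω} {μ : Measure α} [SFinite μ] {p : ℝ} (hp : 0 ≤ p)
    {X : Ω → α} {ξ : Ω → ℝ} (hX : Measurable X) (hξ : Measurable ξ)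
    (hmap : P.map (fun ω => (X ω, ξ ω)) = μ.prod (bern p)) {f : α → ℝ} (hf : Measurable f) :
    ∫ ω, f (X ω) * ξ ω ∂P = p * ∫ x, f x ∂μ := by
  have hmeas : Measurable fun z : α × ℝ => f z.1 * z.2 := by fun_prop
  calc ∫ ω, f (X ω) * ξ ω ∂P = ∫ z, f z.1 * z.2 ∂μ.prod (bern p) := by
        rw [← hmap, integral_map (hX.prodMk hξ).aemeasurable hmeas.aestronglyMeasurable]
    _ = p * ∫ x, f x ∂μ := by
        rw [integral_prod_mul (f := f) (g := fun t => t), integral_id_bern hp, mul_comm]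

lemma lintegral_ofReal_mul_sq_average_sub_le {Ω : Type*} [MeasurableSpace Ω] {P : Measure Ω}
    [IsProbabilityMeasure P] {Y : ℕ → Ω → ℝ} (hY : ∀ i, MemLp (Y i) 2 P)
    (hindep : Pairwise fun i k => IndepFun (Y i) (Y k) P) {m v : ℝ}
    (hmean : ∀ i, ∫ ω, Y i ω ∂P = m) (hsq : ∀ i, ∫ ω, Y i ω ^ 2 ∂P ≤ v) (N : ℕ) :
    ∫⁻ ω, ENNReal.ofReal (N * ((N : ℝ)⁻¹ * ∑ i ∈ Finset.range N, Y i ω - m) ^ 2) ∂P ≤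
      ENNReal.ofReal v := by
  rcases N.eq_zero_or_pos with rfl | hN
  · simp
  set S := ∑ i ∈ Finset.range N, Y i
  have hS_apply (ω : Ω) : S ω = ∑ i ∈ Finset.range N, Y i ω := Finset.sum_apply ω _ _
  have hS_mean : ∫ ω, S ω ∂P = N * m := by
    simp only [hS_apply, integral_finsetSum _ fun i _ => (hY i).integrable one_le_two, hmean,
      Finset.sum_const, Finset.card_range, nsmul_eq_mul]
  have hS_var : variance S P ≤ N * v := by
    rw [IndepFun.variance_sum (fun i _ => hY i) fun i _ k _ hik => hindep hik]
    calc ∑ i ∈ Finset.range N, variance (Y i) P ≤ ∑ _i ∈ Finset.range N, v :=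
          Finset.sum_le_sum fun i _ =>
            (variance_le_expectation_sq (hY i).aestronglyMeasurable).trans (hsq i)
      _ = N * v := by simp
  calc ∫⁻ ω, ENNReal.ofReal (N * ((N : ℝ)⁻¹ * ∑ i ∈ Finset.range N, Y i ω - m) ^ 2) ∂P
      = ∫⁻ ω, ENNReal.ofReal (N : ℝ)⁻¹ * ENNReal.ofReal ((S ω - ∫ ω', S ω' ∂P) ^ 2) ∂P := by
        refine lintegral_congr fun ω => ?_
        rw [← ENNReal.ofReal_mul (by positivity), hS_apply, hS_mean]
        congr 1
        field_simp
    _ = ENNReal.ofReal ((N : ℝ)⁻¹ * variance S P) := by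
        rw [lintegral_const_mul' _ _ ENNReal.ofReal_ne_top, ← evariance_eq_lintegral_ofReal,
          ← (memLp_finsetSum' _ fun i _ => hY i).ofReal_variance_eq,
          ENNReal.ofReal_mul (by positivity)]
    _ ≤ ENNReal.ofReal v := by
        gcongr
        rw [inv_mul_le_iff₀ (by positivity)]
        exact hS_var

lemma lintegral_ofReal_mul_sq_bern_average_sub_le {Ω α : Type*} [MeasurableSpace Ω]
    [MeasurableSpace α] {P : Measure Ω} [IsProbabilityMeasure P] {μ : Measure α}
    [IsProbabilityMeasure μ] {g : α → ℝ} {δ₂ p : ℝ} {X : ℕ → Ω → α} {ξ : ℕ → Ω → ℝ}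
    (hg : Measurable g) (hg0 : ∀ x, 0 ≤ g x)
    (hgδ : ∀ x, g x ≤ δ₂) (hp0 : 0 ≤ p) (hXm : ∀ i, Measurable (X i))
    (hξm : ∀ i, Measurable (ξ i)) (hξ01 : ∀ i ω, ξ i ω = 0 ∨ ξ i ω = 1)
    (hindep : iIndepFun (fun i ω => (X i ω, ξ i ω)) P)
    (hdist : ∀ i, P.map (fun ω => (X i ω, ξ i ω)) =
      (μ.withDensity fun x => ENNReal.ofReal (g x)).prod (bern p))
    {f : α → ℝ} (hf : Measurable f) {b : ℝ} (hfb : ∀ x, f x ^ 2 ≤ b) (N : ℕ) :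
    ∫⁻ ω, ENNReal.ofReal (N * ((N : ℝ)⁻¹ * ∑ i ∈ Finset.range N, f (X i ω) * ξ i ω -
        p * ∫ x, f x * g x ∂μ) ^ 2) ∂P ≤ ENNReal.ofReal (p * δ₂ * b) := by
  have hmean (h : α → ℝ) (hh : Measurable h) (i : ℕ) :
      ∫ ω, h (X i ω) * ξ i ω ∂P = p * ∫ x, h x * g x ∂μ := by
    rw [integral_mul_of_map_eq_prod_bern hp0 (hXm i) (hξm i) (hdist i) hh,
      integral_withDensity_ofReal hg hg0]
  have hbound (i : ℕ) (ω : Ω) : ‖f (X i ω) * ξ i ω‖ ≤ √b := by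
    rw [Real.norm_eq_abs, ← Real.sqrt_sq_eq_abs]
    refine Real.sqrt_le_sqrt ?_
    rcases hξ01 i ω with h | h <;> simp [h, (sq_nonneg _).trans (hfb (X i ω)), hfb]
  have hφ : Measurable fun z : α × ℝ => f z.1 * z.2 := by fun_prop
  refine lintegral_ofReal_mul_sq_average_sub_le
    (fun i => MemLp.of_bound (by fun_prop) _ (ae_of_all _ (hbound i)))
    (fun i k hik => (hindep.indepFun hik).comp hφ hφ)
    (hmean f hf) (fun i => ?_) N
  -- `ξ² = ξ`, so the second moment is again a mean, of `f²` instead of `f`.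
  have hsq : (fun ω => (f (X i ω) * ξ i ω) ^ 2) = fun ω => f (X i ω) ^ 2 * ξ i ω := by
    funext ω
    rcases hξ01 i ω with h | h <;> simp [h]
  rw [hsq, hmean _ (hf.pow_const 2), mul_assoc]
  refine mul_le_mul_of_nonneg_left ?_ hp0
  calc ∫ x, f x ^ 2 * g x ∂μ ≤ ∫ _x, b * δ₂ ∂μ :=
        integral_mono_of_nonneg (ae_of_all _ fun x => mul_nonneg (sq_nonneg _) (hg0 x))
          (integrable_const _) (ae_of_all _ fun x =>
            mul_le_mul (hfb x) (hgδ x) (hg0 x) ((sq_nonneg _).trans (hfb x)))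
    _ = δ₂ * b := by simp [mul_comm]

theorem initial_fluctuation_Hs_moment_bound_general
    {Ω : Type*} [MeasurableSpace Ω] (P : Measure Ω) [IsProbabilityMeasure P]
    (γ s : ℝ) (hγ : 0 < γ) (hs : 1 < s)
    (g : T2 → ℝ) (hg : Measurable g) (hg0 : ∀ x, 0 ≤ g x)
    (δ₂ : ℝ) (hgδ : ∀ x, g x ≤ δ₂)
    (p : ℝ) (hp0 : 0 ≤ p)
    (A : Set T2) (hA : MeasurableSet A)
    (X : ℕ → Ω → T2) (ξ : ℕ → Ω → ℝ)
    (hXm : ∀ i, Measurable (X i)) (hξm : ∀ i, Measurable (ξ i))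
    (hξ01 : ∀ i ω, ξ i ω = 0 ∨ ξ i ω = 1)
    (hindep : ProbabilityTheory.iIndepFun
      (fun i ω => (X i ω, ξ i ω)) P)
    (hdist : ∀ i, Measure.map (fun ω => (X i ω, ξ i ω)) P =
      (MeasureTheory.volume.withDensity fun x => ENNReal.ofReal (g x)).prod (bern p)) :
    ∃ C : ℝ, ∀ N : ℕ, 1 ≤ N →
      (∫⁻ ω, ∑' j : Idx, ENNReal.ofReal ((N : ℝ) *
          ((N : ℝ)⁻¹ * (∑ i ∈ Finset.range N,
              Set.indicator A (fun _ => (1 : ℝ)) (X i ω) * ξ i ω * rho γ s j (X i ω)) -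
            p * ∫ x in A, rho γ s j x * g x) ^ 2) ∂P) ≤
        ENNReal.ofReal (p * δ₂ * C) := by
  refine ⟨∑' j, 4 * sobolevWeight γ s j, fun N _ => ?_⟩
  have hδ₂ : 0 ≤ δ₂ := (hg0 0).trans (hgδ 0)
  have hmode (j : Idx) := lintegral_ofReal_mul_sq_bern_average_sub_le hg hg0 hgδ hp0 hXm hξm hξ01
    hindep hdist ((measurable_rho γ s j).indicator hA) (b := 4 * sobolevWeight γ s j)
    (fun x => by
      by_cases hx : x ∈ A <;> simp [hx, rho_sq_le hγ.le, sobolevWeight_nonneg hγ.le]) N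
  have hsummand (j : Idx) (ω : Ω) (i : ℕ) : A.indicator (fun _ => (1 : ℝ)) (X i ω) * ξ i ω *
      rho γ s j (X i ω) = A.indicator (rho γ s j) (X i ω) * ξ i ω := by
    by_cases hx : X i ω ∈ A <;> simp [hx, mul_comm]
  have hmean (j : Idx) : ∫ x in A, rho γ s j x * g x = ∫ x, A.indicator (rho γ s j) x * g x := by
    simp_rw [← Set.indicator_mul_left, integral_indicator hA]
  calc _ = ∑' j, ∫⁻ ω, ENNReal.ofReal ((N : ℝ) *
          ((N : ℝ)⁻¹ * (∑ i ∈ Finset.range N, A.indicator (rho γ s j) (X i ω) * ξ i ω) -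
            p * ∫ x, A.indicator (rho γ s j) x * g x) ^ 2) ∂P := by
        simp_rw [hsummand, hmean]
        exact lintegral_tsum fun j =>
          have := (measurable_rho γ s j).indicator hA
          Measurable.aemeasurable (by fun_prop)
    _ ≤ ∑' j, ENNReal.ofReal (p * δ₂ * (4 * sobolevWeight γ s j)) := ENNReal.tsum_le_tsum hmode
    _ = ENNReal.ofReal (p * δ₂ * ∑' j, 4 * sobolevWeight γ s j) := by
        rw [← ENNReal.ofReal_tsum_of_nonneg
          (fun j => by have := sobolevWeight_nonneg hγ.le s j; positivity)
          (((summable_sobolevWeight hγ hs).mul_left 4).mul_left _), tsum_mul_left]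

/-- Let `μ₀^{I,N} = N⁻¹ Σᵢ 1_A(Xⁱ)ξᵢ δ_{Xⁱ}` with `Xⁱ` i.i.d. with
density `g ≤ δ₂`, `ξᵢ` i.i.d. Bernoulli(p) independent of the `Xⁱ`, `A` Borel, and
`μ₀^I(dx) = p·1_A(x)g(x)dx`, `V₀^N = √N(μ₀^{I,N} − μ₀^I) ∈ H^{−s}(T²)`.
For any `s > 1`, `sup_{N≥1} E(‖V₀^N‖²_{H^{−s}}) ≤ p·δ₂·C(s)`, where
`‖V₀^N‖²_{H^{−s}} = Σ_j ⟨V₀^N, ρ^{j,s}⟩²` (Parseval) and `C(s)` depends only on `s`. -/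
theorem initial_fluctuation_Hs_moment_bound
    {Ω : Type*} [MeasurableSpace Ω] (P : Measure Ω) [IsProbabilityMeasure P]
    (γ s : ℝ) (hγ : 0 < γ) (hs : 1 < s)
    (g : T2 → ℝ) (hg : Measurable g) (hg0 : ∀ x, 0 ≤ g x)
    (δ₂ : ℝ) (hgδ : ∀ x, g x ≤ δ₂)
    (p : ℝ) (hp0 : 0 ≤ p) (hp1 : p ≤ 1)
    (A : Set T2) (hA : MeasurableSet A)
    (X : ℕ → Ω → T2) (ξ : ℕ → Ω → ℝ)
    (hXm : ∀ i, Measurable (X i)) (hξm : ∀ i, Measurable (ξ i))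
    (hξ01 : ∀ i ω, ξ i ω = 0 ∨ ξ i ω = 1)
    (hindep : ProbabilityTheory.iIndepFun
      (fun i ω => (X i ω, ξ i ω)) P)
    (hdist : ∀ i, Measure.map (fun ω => (X i ω, ξ i ω)) P =
      (MeasureTheory.volume.withDensity fun x => ENNReal.ofReal (g x)).prod (bern p)) :
    ∃ C : ℝ, ∀ N : ℕ, 1 ≤ N →
      (∫⁻ ω, ∑' j : Idx, ENNReal.ofReal ((N : ℝ) *
          ((N : ℝ)⁻¹ * (∑ i ∈ Finset.range N,
              Set.indicator A (fun _ => (1 : ℝ)) (X i ω) * ξ i ω * rho γ s j (X i ω)) -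
            p * ∫ x in A, rho γ s j x * g x) ^ 2) ∂P) ≤
        ENNReal.ofReal (p * δ₂ * C) :=
  initial_fluctuation_Hs_moment_bound_general P γ s hγ hs g hg hg0 δ₂ hgδ p hp0 A hA X ξ hXm hξm
    hξ01 hindep hdist

end
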